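/- arXiv:1801.09840 — 6 statements merged into one kernel-verified Lean document; each statement's English description precedes it below -/
import Mathlib

section
/- Let n, m, k be natural numbers with m ≤ n, let Ṽ1, Ṽ2 : Matrix (Fin n) (Fin m) ℝ, Ỹ1, Ỹ2 : Matrix (Fin n) (Fin k) ℝ, and let up, dn : Fin m → Fin n be the top and bottom index embeddings. Suppose Z1, Z2 : Matrix (Fin m) (Fin k) ℝ solve the interface system: Z1 + (Ṽ1.submatrix dn id) * Z2 = Ỹ1.submatrix dn id and (Ṽ2.submatrix up id) * Z1 + Z2 = Ỹ2.submatrix up id. Define X1 := Ỹ1 − Ṽ1 * Z2 and X2 := Ỹ2 − Ṽ2 * Z1. Then X1, X2 solve the blade system: X1 + Ṽ1 * (X2.submatrix up id) = Ỹ1 and Ṽ2 * (X1.submatrix dn id) + X2 = Ỹ2. -/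
open Matrix

/-- Embedding of the top `m` indices into `Fin n`. -/
def upEmb {n m : ℕ} (h : m ≤ n) : Fin m → Fin n := fun i => ⟨i, by omega⟩

/-- Embedding of the bottom `m` indices into `Fin n`. -/
def dnEmb {n m : ℕ} (h : m ≤ n) : Fin m → Fin n := fun i => ⟨n - m + i, by omega⟩

theorem stmt_2 {n m k : ℕ} (h : m ≤ n)
    (V1 V2 : Matrix (Fin n) (Fin m) ℝ)
    (Y1 Y2 : Matrix (Fin n) (Fin k) ℝ)
    (Z1 Z2 : Matrix (Fin m) (Fin k) ℝ)
    (hiface1 : Z1 + V1.submatrix (dnEmb h) id * Z2 = Y1.submatrix (dnEmb h) id)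
    (hiface2 : V2.submatrix (upEmb h) id * Z1 + Z2 = Y2.submatrix (upEmb h) id)
    (X1 X2 : Matrix (Fin n) (Fin k) ℝ)
    (hX1 : X1 = Y1 - V1 * Z2)
    (hX2 : X2 = Y2 - V2 * Z1) :
    X1 + V1 * X2.submatrix (upEmb h) id = Y1 ∧
      V2 * X1.submatrix (dnEmb h) id + X2 = Y2 := by
  have key : ∀ (e : Fin m → Fin n) (V : Matrix (Fin n) (Fin m) ℝ)
      (Z : Matrix (Fin m) (Fin k) ℝ), (V * Z).submatrix e id = V.submatrix e id * Z := by
    intro e V Z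
    ext i j
    simp [Matrix.mul_apply]
  subst hX1 hX2
  constructor
  · have : (Y2 - V2 * Z1).submatrix (upEmb h) id = Z2 := by
      rw [show (Y2 - V2 * Z1).submatrix (upEmb h) id
          = Y2.submatrix (upEmb h) id - (V2 * Z1).submatrix (upEmb h) id from
          congrFun (congrFun (Matrix.submatrix_sub Y2 (V2 * Z1)) _) _,
        key, ← hiface2]
      abel
    rw [this]
    abel
  · have : (Y1 - V1 * Z2).submatrix (dnEmb h) id = Z1 := by
      rw [show (Y1 - V1 * Z2).submatrix (dnEmb h) id
          = Y1.submatrix (dnEmb h) id - (V1 * Z2).submatrix (dnEmb h) id from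
          congrFun (congrFun (Matrix.submatrix_sub Y1 (V1 * Z2)) _) _,
        key, ← hiface1]
      abel
    rw [this]
    abel
end

section
/- Let n, m be natural numbers with m ≤ n, let Ṽ1, Ṽ2 : Matrix (Fin n) (Fin m) ℝ, and let up, dn : Fin m → Fin n be the top and bottom index embeddings. Let Pup : Matrix (Fin m) (Fin n) ℝ and Pdn : Matrix (Fin m) (Fin n) ℝ be the selection matrices with (Pup) i j = if j = up i then 1 else 0 and (Pdn) i j = if j = dn i then 1 else 0. Then the 2n×2n blade matrix M = fromBlocks 1 (Ṽ1 * Pup) (Ṽ2 * Pdn) 1 is invertible if and only if the 2m×2m interface matrix S = fromBlocks 1 (Ṽ1.submatrix dn id) (Ṽ2.submatrix up id) 1 is invertible. -/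
open Matrix

/-- Selection matrix of an index embedding `f : Fin m → Fin n`:
the `m × n` matrix with `(i,j)` entry `1` if `j = f i` and `0` otherwise. -/
def selMat {n m : ℕ} (f : Fin m → Fin n) : Matrix (Fin m) (Fin n) ℝ :=
  Matrix.of fun i j => if j = f i then 1 else 0

lemma selMat_mul {n m : ℕ} (f : Fin m → Fin n) (V : Matrix (Fin n) (Fin m) ℝ) :
    selMat f * V = V.submatrix f id := by
  ext i j
  simp [selMat, Matrix.mul_apply]

theorem stmt_3 {n m : ℕ} (h : m ≤ n)
    (V1 V2 : Matrix (Fin n) (Fin m) ℝ) :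
    IsUnit (Matrix.fromBlocks (1 : Matrix (Fin n) (Fin n) ℝ)
        (V1 * selMat (upEmb h)) (V2 * selMat (dnEmb h)) 1) ↔
      IsUnit (Matrix.fromBlocks (1 : Matrix (Fin m) (Fin m) ℝ)
        (V1.submatrix (dnEmb h) id) (V2.submatrix (upEmb h) id) 1) := by
  rw [Matrix.isUnit_iff_isUnit_det, Matrix.isUnit_iff_isUnit_det,
    Matrix.det_fromBlocks_one₁₁, Matrix.det_fromBlocks_one₁₁]
  have key : det (1 - V2 * selMat (dnEmb h) * (V1 * selMat (upEmb h))) =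
      det (1 - V2.submatrix (upEmb h) id * V1.submatrix (dnEmb h) id) := by
    rw [show V2 * selMat (dnEmb h) * (V1 * selMat (upEmb h)) =
        (V2 * (selMat (dnEmb h) * V1)) * selMat (upEmb h) by
          simp [Matrix.mul_assoc],
      Matrix.det_one_sub_mul_comm, selMat_mul, selMat_mul,
      show (V2 * V1.submatrix (dnEmb h) id).submatrix (upEmb h) id =
        V2.submatrix (upEmb h) id * V1.submatrix (dnEmb h) id from by
          ext i j; simp [Matrix.mul_apply]]
  rw [key]
end

section
/- Let A : Matrix (Fin n) (Fin n) ℝ be symmetric (Hermitian over ℝ) with n ≥ 1, let f : Fin m → Fin n be injective with m ≥ 1, and let B = A.submatrix f f. Then every eigenvalue of B lies between the smallest and the largest eigenvalue of A: min of the eigenvalues of A ≤ min of the eigenvalues of B and max of the eigenvalues of B ≤ max of the eigenvalues of A. -/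
/-!
In the Loewner order, `c ≤ λ` for every eigenvalue `λ` of a Hermitian matrix `A` exactly when
`c • 1 ≤ A`, and dually for upper bounds. Passing to a principal submatrix along an injective
map preserves the Loewner order (a principal submatrix of a positive semidefinite matrix is
positive semidefinite) and sends `c • 1` to `c • 1`, so the eigenvalue bounds of `A` are
inherited by `A.submatrix f f`.
-/

open scoped ComplexOrder MatrixOrder

namespace Matrix

variable {𝕜 ι κ : Type*} [RCLike 𝕜]

theorem submatrix_algebraMap {R α : Type*} [CommSemiring R] [Semiring α] [Algebra R α]
    [Fintype ι] [DecidableEq ι] [Fintype κ] [DecidableEq κ] {f : κ → ι}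
    (hf : Function.Injective f) (r : R) :
    (algebraMap R (Matrix ι ι α) r).submatrix f f = algebraMap R (Matrix κ κ α) r := by
  rw [algebraMap_eq_diagonal, algebraMap_eq_diagonal, submatrix_diagonal _ _ hf]
  rfl

theorem submatrix_mono {A B : Matrix ι ι 𝕜} (h : A ≤ B) (f : κ → ι) :
    A.submatrix f f ≤ B.submatrix f f :=
  PosSemidef.submatrix h f

namespace IsHermitian

variable [Fintype ι] [DecidableEq ι] {A : Matrix ι ι 𝕜}

theorem algebraMap_le_iff_forall_le_eigenvalues (hA : A.IsHermitian) {c : ℝ} :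
    algebraMap ℝ (Matrix ι ι 𝕜) c ≤ A ↔ ∀ i, c ≤ hA.eigenvalues i := by
  rw [algebraMap_le_iff_le_spectrum (R := ℝ) hA.isSelfAdjoint,
    hA.spectrum_real_eq_range_eigenvalues, Set.forall_mem_range]

theorem le_algebraMap_iff_forall_eigenvalues_le (hA : A.IsHermitian) {c : ℝ} :
    A ≤ algebraMap ℝ (Matrix ι ι 𝕜) c ↔ ∀ i, hA.eigenvalues i ≤ c := by
  rw [le_algebraMap_iff_spectrum_le (R := ℝ) hA.isSelfAdjoint,
    hA.spectrum_real_eq_range_eigenvalues, Set.forall_mem_range]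

variable [Fintype κ] [DecidableEq κ] {f : κ → ι}

theorem le_eigenvalues_submatrix (hA : A.IsHermitian) (hf : Function.Injective f) {c : ℝ}
    (h : ∀ i, c ≤ hA.eigenvalues i) (j : κ) : c ≤ (hA.submatrix f).eigenvalues j := by
  refine (hA.submatrix f).algebraMap_le_iff_forall_le_eigenvalues.1 ?_ j
  rw [← submatrix_algebraMap hf]
  exact submatrix_mono (hA.algebraMap_le_iff_forall_le_eigenvalues.2 h) f

theorem eigenvalues_submatrix_le (hA : A.IsHermitian) (hf : Function.Injective f) {c : ℝ}
    (h : ∀ i, hA.eigenvalues i ≤ c) (j : κ) : (hA.submatrix f).eigenvalues j ≤ c := by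
  refine (hA.submatrix f).le_algebraMap_iff_forall_eigenvalues_le.1 ?_ j
  rw [← submatrix_algebraMap hf]
  exact submatrix_mono (hA.le_algebraMap_iff_forall_eigenvalues_le.2 h) f

end IsHermitian

end Matrix

theorem stmt_5 {n m : ℕ} (A : Matrix (Fin (n + 1)) (Fin (n + 1)) ℝ)
    (hA : A.IsHermitian) (f : Fin (m + 1) → Fin (n + 1))
    (hf : Function.Injective f) :
    (⨅ i, hA.eigenvalues i) ≤ (⨅ j, (hA.submatrix f).eigenvalues j) ∧
      (⨆ j, (hA.submatrix f).eigenvalues j) ≤ ⨆ i, hA.eigenvalues i :=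
  ⟨le_ciInf <| hA.le_eigenvalues_submatrix hf fun i ↦ ciInf_le (Set.finite_range _).bddBelow i,
    ciSup_le <| hA.eigenvalues_submatrix_le hf fun i ↦ le_ciSup (Set.finite_range _).bddAbove i⟩
end

section
/- Let A : Matrix (Fin n) (Fin n) ℝ be a symmetric positive definite tridiagonal matrix, i.e. A i j = 0 whenever |i − j| > 1, and suppose all sub- and super-diagonal entries are nonzero: A i (i+1) ≠ 0 for all i < n−1. Then every entry of A⁻¹ is nonzero. -/
/-!
Let `x` be column `j` of `A⁻¹`, so `A x = e_j`, and suppose `x i = 0` for some `i ≤ j`.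
Truncating `x` to the indices `≤ i` gives a vector `z` with `(A z)_k = (A x)_k = 0` for `k < i`
(the band structure hides the truncation from these rows) and `z_i = 0`, so `zᴴ A z = 0` and
positive definiteness forces `x` to vanish up to `i`. Rows `i, …, j - 1` of `A x = 0` then read
`A k (k+1) · x (k+1) = 0`, so the nonzero superdiagonal propagates the zeros up to `x j`,
contradicting `x j = (A⁻¹) j j > 0`. The case `j < i` follows by symmetry.
-/

namespace Matrix

variable {n : ℕ}

theorem PosDef.eq_zero_of_mulVec_apply_eq_zero_of_lt {R : Type*} [Ring R] [PartialOrder R]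
    [StarRing R] {A : Matrix (Fin n) (Fin n) R} (hA : A.PosDef)
    (hupper : ∀ k l : Fin n, (k : ℕ) + 1 < l → A k l = 0) {x : Fin n → R} {i : Fin n}
    (hAx : ∀ k < i, (A *ᵥ x) k = 0) (hxi : x i = 0) : ∀ k ≤ i, x k = 0 := by
  set z : Fin n → R := fun k => if k ≤ i then x k else 0 with hz
  have hAz : ∀ k < i, (A *ᵥ z) k = 0 := by
    intro k hk
    rw [← hAx k hk]
    simp only [mulVec, dotProduct]
    refine Finset.sum_congr rfl fun l _ => ?_
    by_cases hl : l ≤ i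
    · simp only [hz, if_pos hl]
    · rw [hupper k l (by omega), zero_mul, zero_mul]
  have hquad : star z ⬝ᵥ A *ᵥ z = 0 := by
    refine Finset.sum_eq_zero fun k _ => ?_
    rcases lt_trichotomy k i with hk | rfl | hk
    · rw [hAz k hk, mul_zero]
    · simp [hz, hxi]
    · simp [hz, not_le.mpr hk]
  have hz0 : z = 0 := by
    by_contra hne
    exact (hA.dotProduct_mulVec_pos hne).ne' hquad
  intro k hk
  simpa [hz, hk] using congrFun hz0 k

theorem mulVec_apply_eq_mul_of_forall_le {R : Type*} [NonUnitalNonAssocSemiring R]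
    {A : Matrix (Fin n) (Fin n) R} (hupper : ∀ k l : Fin n, (k : ℕ) + 1 < l → A k l = 0)
    {x : Fin n → R} {p q : Fin n} (hpq : (q : ℕ) = p + 1) (hx : ∀ l ≤ p, x l = 0) :
    (A *ᵥ x) p = A p q * x q := by
  simp only [mulVec, dotProduct]
  refine Finset.sum_eq_single q (fun l _ hlq => ?_) (absurd (Finset.mem_univ q))
  rcases le_or_gt l p with hlp | hpl
  · rw [hx l hlp, mul_zero]
  · rw [hupper p l (by omega), zero_mul]

theorem eq_zero_of_mulVec_apply_eq_zero_of_superdiag_ne_zero {R : Type*} [Semiring R]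
    [NoZeroDivisors R] {A : Matrix (Fin n) (Fin n) R}
    (hupper : ∀ k l : Fin n, (k : ℕ) + 1 < l → A k l = 0)
    (hsup : ∀ k l : Fin n, (l : ℕ) = k + 1 → A k l ≠ 0) {x : Fin n → R} {i m : Fin n}
    (hAx : ∀ k < m, (A *ᵥ x) k = 0) (hx : ∀ k ≤ i, x k = 0) : ∀ k ≤ m, x k = 0 := by
  intro k
  induction k using WellFoundedLT.induction with
  | _ k ih =>
    intro hkm
    by_cases hki : k ≤ i
    · exact hx k hki
    set p : Fin n := ⟨k - 1, by omega⟩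
    have hpk : (k : ℕ) = p + 1 := by simp only [p]; omega
    have hrow : (A *ᵥ x) p = A p k * x k :=
      mulVec_apply_eq_mul_of_forall_le hupper hpk
        fun l hl => ih l (by omega) (by rw [Fin.le_def] at hkm ⊢; omega)
    rw [hAx p (by rw [Fin.lt_def]; omega)] at hrow
    exact (mul_eq_zero.mp hrow.symm).resolve_left (hsup p k hpk)

theorem PosDef.inv_apply_ne_zero_of_le {K : Type*} [Field K] [PartialOrder K] [StarRing K]
    {A : Matrix (Fin n) (Fin n) K} (hA : A.PosDef)
    (hupper : ∀ k l : Fin n, (k : ℕ) + 1 < l → A k l = 0)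
    (hsup : ∀ k l : Fin n, (l : ℕ) = k + 1 → A k l ≠ 0) {i j : Fin n} (hij : i ≤ j) :
    A⁻¹ i j ≠ 0 := by
  intro hij0
  have hAx : ∀ k ≠ j, (A *ᵥ A⁻¹.col j) k = 0 := fun k hkj => by
    rw [← mulVec_single_one, mulVec_mulVec,
      mul_nonsing_inv A ((isUnit_iff_isUnit_det A).mp hA.isUnit), one_mulVec,
      Pi.single_apply, if_neg hkj]
  have hx_le_i : ∀ k ≤ i, A⁻¹.col j k = 0 := hA.eq_zero_of_mulVec_apply_eq_zero_of_lt hupper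
    (fun k hk => hAx k (hk.trans_le hij).ne) hij0
  have hxj := eq_zero_of_mulVec_apply_eq_zero_of_superdiag_ne_zero hupper hsup
    (fun k hk => hAx k hk.ne) hx_le_i j le_rfl
  exact hA.inv.diag_pos.ne' hxj

end Matrix

theorem stmt_7 {n : ℕ} (A : Matrix (Fin n) (Fin n) ℝ) (hA : A.PosDef)
    (htri : ∀ i j : Fin n, ((i : ℕ) + 1 < (j : ℕ) ∨ (j : ℕ) + 1 < (i : ℕ)) → A i j = 0)
    (hsup : ∀ i j : Fin n, (j : ℕ) = (i : ℕ) + 1 → A i j ≠ 0) :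
    ∀ i j : Fin n, A⁻¹ i j ≠ 0 := by
  have hupper : ∀ k l : Fin n, (k : ℕ) + 1 < l → A k l = 0 := fun k l h => htri k l (Or.inl h)
  intro i j
  rcases le_total i j with hij | hji
  · exact hA.inv_apply_ne_zero_of_le hupper hsup hij
  · rw [← hA.inv.isHermitian.apply i j, star_trivial]
    exact hA.inv_apply_ne_zero_of_le hupper hsup hji
end

section
/- Let s ≥ 1 be a natural number and let x : Fin N → EuclideanSpace ℝ (Fin s) be N ≥ 1 points that are pairwise 1-separated, i.e. dist (x i) (x j) ≥ 1 for all i ≠ j. Then there exist indices i, j such that dist (x i) (x j) ≥ ((N : ℝ)^(1/(s:ℝ)) − 1) / 2. In particular, the diameter of any set of N pairwise 1-separated points in s-dimensional Euclidean space is bounded below by (N^{1/s} − 1)/2 ∈ Ω(N^{1/s}). -/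
open MeasureTheory Metric ENNReal

theorem stmt_8 {s N : ℕ} (hs : 1 ≤ s) (hN : 1 ≤ N)
    (x : Fin N → EuclideanSpace ℝ (Fin s))
    (hsep : ∀ i j : Fin N, i ≠ j → 1 ≤ dist (x i) (x j)) :
    ∃ i j : Fin N, ((N : ℝ) ^ ((1 : ℝ) / (s : ℝ)) - 1) / 2 ≤ dist (x i) (x j) := by
  haveI : NeZero N := ⟨by omega⟩
  haveI : Nontrivial (EuclideanSpace ℝ (Fin s)) :=
    Module.nontrivial_of_finrank_pos (R := ℝ) (by rw [finrank_euclideanSpace_fin]; omega)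
  -- R is the max pairwise distance
  obtain ⟨p, -, hp⟩ := Finset.exists_mem_eq_sup' (s := (Finset.univ : Finset (Fin N × Fin N)))
    ⟨(0, 0), Finset.mem_univ _⟩ (fun p => dist (x p.1) (x p.2))
  set R : ℝ := Finset.univ.sup' ⟨(0, 0), Finset.mem_univ _⟩ (fun p : Fin N × Fin N => dist (x p.1) (x p.2)) with hR
  refine ⟨p.1, p.2, ?_⟩
  rw [← hp]
  have hRle : ∀ i j : Fin N, dist (x i) (x j) ≤ R := fun i j => by
    rw [hR]; exact Finset.le_sup' (fun p : Fin N × Fin N => dist (x p.1) (x p.2)) (Finset.mem_univ (i, j))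
  have hR0 : 0 ≤ R := le_trans dist_nonneg (hRle 0 0)
  -- disjoint balls
  have hdisj : Pairwise fun i j : Fin N => Disjoint (ball (x i) (1/2)) (ball (x j) (1/2)) := by
    intro i j hij
    apply ball_disjoint_ball
    have := hsep i j hij
    norm_num
    linarith
  have hsub : (⋃ i, ball (x i) (1/2)) ⊆ ball (x 0) (R + 1/2) := by
    refine Set.iUnion_subset fun i => ?_
    intro y hy
    have := dist_triangle y (x i) (x 0)
    simp only [mem_ball] at hy ⊢
    have h1 : dist (x i) (x 0) ≤ R := hRle i 0
    linarith
  have hmeas : ∀ i : Fin N, MeasurableSet (ball (x i) (1/2)) := fun i => measurableSet_ball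
  have hvol : (volume : Measure (EuclideanSpace ℝ (Fin s))) (⋃ i, ball (x i) (1/2)) = ∑ i : Fin N, volume (ball (x i) (1/2)) :=
    (measure_iUnion hdisj hmeas).trans (tsum_fintype _)
  have hb : ∀ (c : EuclideanSpace ℝ (Fin s)) (r : ℝ), 0 ≤ r →
      (volume : Measure (EuclideanSpace ℝ (Fin s))) (ball c r) = ENNReal.ofReal (r ^ s) * volume (ball (0 : EuclideanSpace ℝ (Fin s)) 1) := by
    intro c r hr
    rw [Measure.addHaar_ball _ _ hr, finrank_euclideanSpace_fin]
  have key : (N : ℝ≥0∞) * (ENNReal.ofReal ((1/2 : ℝ) ^ s) * volume (ball (0 : EuclideanSpace ℝ (Fin s)) 1))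
      ≤ ENNReal.ofReal ((R + 1/2) ^ s) * volume (ball (0 : EuclideanSpace ℝ (Fin s)) 1) := by
    calc (N : ℝ≥0∞) * (ENNReal.ofReal ((1/2 : ℝ) ^ s) * volume (ball (0 : EuclideanSpace ℝ (Fin s)) 1))
        = ∑ i : Fin N, volume (ball (x i) (1/2)) := by
          simp only [fun i => hb (x i) (1/2) (by norm_num)]
          simp [Finset.sum_const, mul_comm]
      _ = volume (⋃ i, ball (x i) (1/2)) := hvol.symm
      _ ≤ volume (ball (x 0) (R + 1/2)) := measure_mono hsub
      _ = ENNReal.ofReal ((R + 1/2) ^ s) * volume (ball (0 : EuclideanSpace ℝ (Fin s)) 1) := hb _ _ (by linarith)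
  have hB0 : volume (ball (0 : EuclideanSpace ℝ (Fin s)) 1) ≠ 0 := (measure_ball_pos _ _ one_pos).ne'
  have hBt : volume (ball (0 : EuclideanSpace ℝ (Fin s)) 1) ≠ ⊤ := measure_ball_lt_top.ne
  have key2 : (N : ℝ≥0∞) * ENNReal.ofReal ((1/2 : ℝ) ^ s) ≤ ENNReal.ofReal ((R + 1/2) ^ s) := by
    have h := key
    rw [← mul_assoc] at h
    exact (ENNReal.mul_le_mul_iff_left hB0 hBt).mp h
  have keyR : (N : ℝ) * (1/2 : ℝ) ^ s ≤ (R + 1/2) ^ s := by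
    have := ENNReal.toReal_mono (by simp) key2
    rw [ENNReal.toReal_mul, ENNReal.toReal_ofReal (by positivity),
      ENNReal.toReal_ofReal (by positivity)] at this
    simpa using this
  -- now N ≤ (2R+1)^s
  have hN2 : (N : ℝ) ≤ (2 * R + 1) ^ s := by
    have h : (R + 1/2) ^ s = (2 * R + 1) ^ s * (1/2) ^ s := by
      rw [← mul_pow]; ring_nf
    nlinarith [pow_pos (by norm_num : (0:ℝ) < 1/2) s, keyR]
  have hs0 : (0:ℝ) < s := by exact_mod_cast hs
  have : (N : ℝ) ^ ((1:ℝ)/(s:ℝ)) ≤ 2 * R + 1 := by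
    have h1 : (N : ℝ) ^ ((1:ℝ)/(s:ℝ)) ≤ ((2 * R + 1) ^ s : ℝ) ^ ((1:ℝ)/(s:ℝ)) :=
      Real.rpow_le_rpow (by positivity) hN2 (by positivity)
    calc (N : ℝ) ^ ((1:ℝ)/(s:ℝ)) ≤ ((2 * R + 1) ^ s : ℝ) ^ ((1:ℝ)/(s:ℝ)) := h1
      _ = (2 * R + 1) := by
          rw [← Real.rpow_natCast (2 * R + 1) s, ← Real.rpow_mul (by linarith)]
          rw [mul_one_div, div_self hs0.ne', Real.rpow_one]
  linarith
end

section
/- Let s > 0 be a real number, N ≥ 1 a real number, and p any real number. Then max (N ^ (1 − p)) (N ^ (p / s)) ≥ N ^ (1 / (s + 1)). -/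
theorem stmt_11 (s N p : ℝ) (hs : 0 < s) (hN : 1 ≤ N) :
    N ^ ((1 : ℝ) / (s + 1)) ≤ max (N ^ (1 - p)) (N ^ (p / s)) := by
  rcases le_total p (s / (s + 1)) with h | h
  · refine le_max_of_le_left (Real.rpow_le_rpow_of_exponent_le hN ?_)
    rw [le_div_iff₀ (by linarith)] at h
    rw [div_le_iff₀ (by linarith)]
    nlinarith
  · refine le_max_of_le_right (Real.rpow_le_rpow_of_exponent_le hN ?_)
    rw [div_le_div_iff₀ (by linarith) hs]
    rw [div_le_iff₀ (by linarith)] at h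
    nlinarith
end
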